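/- Let G = (N, Act, R) be a first-order grammar such that for each nonterminal A and each i ∈ [1, arity(A)] there exists an (A,i)-sink word; let M_0 = 1 + max over all A, i of the length of a shortest (A,i)-sink word, and let Hmax be the maximum depth of a right-hand side of a rule of G. Suppose T →u T' is a shortest path from T to T' in the rule-based LTS L^rul_G and is not sinking, and write it as T →u1 V →u2 V' →u3 T' where V →u2 V' is the last non-sink occurring in the path. Then T' = Gσ for some finite term G with depth(G) ≤ (1 + M_0)·Hmax and some substitution σ whose range consists of the root-successors (depth-1 subterms) of V. -/

import Mathlib

/-- The "signature" of a first-order grammar: a finite set of ranked nonterminals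
(represented as `Fin ntCount`, with arities) and a finite set of actions
(represented as `Fin actCount`). -/
structure GrammarSig where
  ntCount : ℕ
  arity : Fin ntCount → ℕ
  actCount : ℕ

/-- The polynomial functor whose coinductive fixed point is the set of (finite or
infinite) terms over the nonterminals: a node is labelled either by a nonterminal
`A` (with `arity A` ordered children) or by a variable `x_n`, `n : ℕ` (a leaf). -/
def GrammarSig.P (S : GrammarSig) : PFunctor :=
  ⟨Fin S.ntCount ⊕ ℕ, fun l =>
    match l with
    | Sum.inl A => Fin (S.arity A)
    | Sum.inr _ => Empty⟩

/-- Terms over the signature `S`: finite or infinite ordered trees with nodes labelled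
by nonterminals (inner nodes) or variables (leaves). -/
def GTerm (S : GrammarSig) := PFunctor.M S.P

/-- The term consisting of the single variable `x_n`. -/
def GTerm.var (S : GrammarSig) (n : ℕ) : GTerm S :=
  PFunctor.M.mk ⟨Sum.inr n, fun e => e.elim⟩

/-- The term `A(c 0, …, c (m-1))`. -/
def GTerm.app {S : GrammarSig} (A : Fin S.ntCount) (c : Fin (S.arity A) → GTerm S) :
    GTerm S :=
  PFunctor.M.mk ⟨Sum.inl A, c⟩

/-- Applying a substitution `σ` to a term `T`: every occurrence of a variable `x_n`
in `T` is replaced by `σ n` (defined corecursively). -/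
def GTerm.subst {S : GrammarSig} (σ : ℕ → GTerm S) (T : GTerm S) : GTerm S :=
  PFunctor.M.corec
    (fun st : Bool × GTerm S =>
      match PFunctor.M.dest st.2 with
      | ⟨Sum.inl A, c⟩ => ⟨Sum.inl A, fun i => (st.1, c i)⟩
      | ⟨Sum.inr n, _⟩ =>
        if st.1 then
          ⟨(PFunctor.M.dest (σ n)).1, fun i => (false, (PFunctor.M.dest (σ n)).2 i)⟩
        else ⟨Sum.inr n, fun e => e.elim⟩)
    (true, T)

/-- A substitution (as a total map `ℕ → GTerm S`) has finite support. -/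
def FinSupp {S : GrammarSig} (σ : ℕ → GTerm S) : Prop :=
  {n | σ n ≠ GTerm.var S n}.Finite

/-- `childRel S T T'`: `T'` is a root-successor (depth-1 subterm occurrence) of `T`. -/
def childRel (S : GrammarSig) : GTerm S → GTerm S → Prop := fun T T' =>
  ∃ (A : Fin S.ntCount) (c : Fin (S.arity A) → GTerm S), T = GTerm.app A c ∧ ∃ i, T' = c i

/-- `T'` is a subterm of `T`. -/
def SubtermOf (S : GrammarSig) (T' T : GTerm S) : Prop :=
  Relation.ReflTransGen (childRel S) T T'

/-- The variable `x_n` occurs in `T`. -/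
def VarOccurs (S : GrammarSig) (n : ℕ) (T : GTerm S) : Prop :=
  SubtermOf S (GTerm.var S n) T

/-- `OccAtDepth S d T V`: `V` has a subterm-occurrence in `T` at depth `d`. -/
inductive OccAtDepth (S : GrammarSig) : ℕ → GTerm S → GTerm S → Prop
  | refl (T : GTerm S) : OccAtDepth S 0 T T
  | step {d : ℕ} {T T' V : GTerm S} :
      childRel S T T' → OccAtDepth S d T' V → OccAtDepth S (d + 1) T V

/-- A term is regular if it has only finitely many distinct subterms. -/
def RegularT (S : GrammarSig) (T : GTerm S) : Prop := {T' | SubtermOf S T' T}.Finite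

/-- The presentation size of a (regular) term: the number of its distinct subterms. -/
noncomputable def pressize (S : GrammarSig) (T : GTerm S) : ℕ :=
  {T' | SubtermOf S T' T}.ncard

/-- Finite terms over the signature `S`. -/
inductive FTerm (S : GrammarSig) where
  | var : ℕ → FTerm S
  | app : (A : Fin S.ntCount) → (Fin (S.arity A) → FTerm S) → FTerm S

/-- The (finite or infinite) term corresponding to a finite term. -/
def FTerm.toTerm {S : GrammarSig} : FTerm S → GTerm S
  | .var n => GTerm.var S n
  | .app A c => GTerm.app A (fun i => (c i).toTerm)

/-- The variable `x_n` occurs in the finite term `E`. -/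
def FTerm.VOccurs {S : GrammarSig} (n : ℕ) : FTerm S → Prop
  | .var m => m = n
  | .app _ c => ∃ i, (c i).VOccurs n

/-- The depth of a finite term (the largest depth of a subterm occurrence). -/
def FTerm.depth {S : GrammarSig} : FTerm S → ℕ
  | .var _ => 0
  | .app _ c => Finset.univ.sup fun i => (c i).depth + 1

/-- A rule `A(x_0, …, x_{m−1}) →ₐ E` of a first-order grammar: `E` is a finite term
all of whose variables are among `x_0, …, x_{m−1}` where `m = arity A`. -/
structure GRule (S : GrammarSig) where
  nt : Fin S.ntCount
  act : Fin S.actCount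
  rhs : FTerm S
  rhs_wf : ∀ n : ℕ, rhs.VOccurs n → n < S.arity nt

/-- A first-order grammar: a signature together with a finite set (list) of rules. -/
structure FOGrammar where
  sig : GrammarSig
  rules : List (GRule sig)

/-- The term `A(x_0, …, x_{m−1})` (the left-hand side of rules for `A`). -/
def lhsTerm {S : GrammarSig} (A : Fin S.ntCount) : GTerm S :=
  GTerm.app A fun i => GTerm.var S i.val

/-- A labelled transition system with states `S` and actions `A`. -/
structure LTS (S : Type*) (A : Type*) where
  Tr : A → S → S → Prop

namespace LTS

variable {S A : Type*}

/-- An LTS is image-finite if each state has finitely many `a`-successors. -/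
def ImageFinite (L : LTS S A) : Prop := ∀ a s, {t | L.Tr a s t}.Finite

/-- A set `B` of pairs of states covers the pair `p`. -/
def Covers (L : LTS S A) (B : Set (S × S)) (p : S × S) : Prop :=
  (∀ a s', L.Tr a p.1 s' → ∃ t', L.Tr a p.2 t' ∧ (s', t') ∈ B) ∧
  (∀ a t', L.Tr a p.2 t' → ∃ s', L.Tr a p.1 s' ∧ (s', t') ∈ B)

/-- `B'` covers the set `B` (i.e., covers each of its pairs). -/
def CoversSet (L : LTS S A) (B' B : Set (S × S)) : Prop := ∀ p ∈ B, L.Covers B' p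

/-- `B ⊐ B'`: `B'` is a minimal expansion for `B`. -/
def MinExp (L : LTS S A) (B B' : Set (S × S)) : Prop :=
  L.CoversSet B' B ∧ ∀ B'', B'' ⊂ B' → ¬ L.CoversSet B'' B

/-- The stratified equivalences: `∼_0` is everything, `∼_{k+1}` are the pairs covered by `∼_k`. -/
def simN (L : LTS S A) : ℕ → Set (S × S)
  | 0 => Set.univ
  | k + 1 => {p | L.Covers (L.simN k) p}

/-- `eqlevel(s,t) ∈ ℕ ∪ {ω}`: the largest `e` with `s ∼_e t` (`⊤` plays the role of `ω`,
meaning `s ∼_k t` for all `k ∈ ℕ`). -/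
noncomputable def eqlevel (L : LTS S A) (s t : S) : ℕ∞ :=
  sSup {e : ℕ∞ | ∃ k : ℕ, e = (k : ℕ∞) ∧ (s, t) ∈ L.simN k}

/-- `LeastEqLev(B) = min {eqlevel(s,t) | (s,t) ∈ B}`, with `min ∅ = ω = ⊤`. -/
noncomputable def leastEqLev (L : LTS S A) (B : Set (S × S)) : ℕ∞ :=
  sInf {e : ℕ∞ | ∃ p ∈ B, e = L.eqlevel p.1 p.2}

/-- `B` is a bisimulation if it covers itself. -/
def Bisimulation (L : LTS S A) (B : Set (S × S)) : Prop := L.CoversSet B B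

/-- `s ∼ t`: some bisimulation contains `(s,t)`. -/
def Bisim (L : LTS S A) (s t : S) : Prop := ∃ B, L.Bisimulation B ∧ (s, t) ∈ B

end LTS

/-- The rule-based LTS `L^rul_G`: states are the terms, actions are the rules of `G`,
and a rule `r : A(x_0,…,x_{m−1}) →ₐ E` induces `(A(x_0,…,x_{m−1}))σ →r Eσ` for every
substitution `σ`. -/
def LTSrul (G : FOGrammar) : LTS (GTerm G.sig) (GRule G.sig) where
  Tr r T T' := r ∈ G.rules ∧ ∃ σ : ℕ → GTerm G.sig, FinSupp σ ∧
    T = GTerm.subst σ (lhsTerm r.nt) ∧ T' = GTerm.subst σ r.rhs.toTerm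

/-- The action-based LTS `L^act_G`: the transitions of `L^rul_G` relabelled by the
actions of the rules; in addition each variable `x_n` has its own fresh action
(represented by `Sum.inr n`) with the single transition `x_n →_{a_{x_n}} x_n`. -/
def LTSact (G : FOGrammar) : LTS (GTerm G.sig) (Fin G.sig.actCount ⊕ ℕ) where
  Tr a T T' :=
    match a with
    | Sum.inl a => ∃ r : GRule G.sig, r.act = a ∧ (LTSrul G).Tr r T T'
    | Sum.inr n => T = GTerm.var G.sig n ∧ T' = GTerm.var G.sig n

/-- `RPath G T w T'`: the path `T →w T'` in the rule-based LTS `L^rul_G`, `w ∈ R*`. -/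
inductive RPath (G : FOGrammar) : GTerm G.sig → List (GRule G.sig) → GTerm G.sig → Prop
  | nil (T : GTerm G.sig) : RPath G T [] T
  | cons {T T1 T' : GTerm G.sig} {r : GRule G.sig} {w : List (GRule G.sig)} :
      (LTSrul G).Tr r T T1 → RPath G T1 w T' → RPath G T (r :: w) T'

/-- `APath G T w T'`: the path `T →w T'` in the action-based LTS `L^act_G` for a word
`w ∈ Act*` of proper actions (using no special variable transitions). -/
inductive APath (G : FOGrammar) :
    GTerm G.sig → List (Fin G.sig.actCount) → GTerm G.sig → Prop
  | nil (T : GTerm G.sig) : APath G T [] T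
  | cons {T T1 T' : GTerm G.sig} {a : Fin G.sig.actCount} {w : List (Fin G.sig.actCount)} :
      (LTSact G).Tr (Sum.inl a) T T1 → APath G T1 w T' → APath G T (a :: w) T'

/-- `w ∈ R*` is an `(A,i)`-sink word: `A(x_0,…,x_{m−1}) →w x_i` in `L^rul_G`. -/
def SinkWord (G : FOGrammar) (A : Fin G.sig.ntCount) (i : Fin (G.sig.arity A))
    (w : List (GRule G.sig)) : Prop :=
  RPath G (lhsTerm A) w (GTerm.var G.sig i.val)

/-- `M_0 = 1 + max_{A,i} (length of a shortest (A,i)-sink word)`. -/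
noncomputable def M0 (G : FOGrammar) : ℕ :=
  1 + Finset.univ.sup fun A : Fin G.sig.ntCount =>
        Finset.univ.sup fun i : Fin (G.sig.arity A) =>
          sInf {n : ℕ | ∃ w, SinkWord G A i w ∧ w.length = n}

/-- The path `V →w` is root-performable: `A(x_0,…,x_{m−1}) →w` for `A` the root
nonterminal of `V` (so `w` is enabled by any term with root `A`). A root-performable
path of length `M_0` is called a non-sink. -/
def RootPerf (G : FOGrammar) (V : GTerm G.sig) (w : List (GRule G.sig)) : Prop :=
  ∃ (A : Fin G.sig.ntCount) (c : Fin (G.sig.arity A) → GTerm G.sig),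
    V = GTerm.app A c ∧ ∃ H, RPath G (lhsTerm A) w H

/-- The path `T →u` is sinking: it contains no non-sink, i.e. every factorization
`u = u_1 u_2 u_3` with `|u_2| = M_0` sinks to a root-successor within the middle
segment: `u_2 = u'_2 u''_2` with `u'_2 ≠ ε`, `T →u_1 V' →u'_2 V''`, and `V''` a
root-successor of `V'`. -/
def Sinking (G : FOGrammar) (T : GTerm G.sig) (u : List (GRule G.sig)) : Prop :=
  ∀ u1 u2 u3, u = u1 ++ u2 ++ u3 → u2.length = M0 G →
    ∃ (u2a u2b : List (GRule G.sig)) (V' V'' : GTerm G.sig),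
      u2 = u2a ++ u2b ∧ u2a ≠ [] ∧
      RPath G T u1 V' ∧ RPath G V' u2a V'' ∧ childRel G.sig V' V''

/-- `Hmax`: the maximum depth of a right-hand side of a rule of `G`. -/
def Hmax (G : FOGrammar) : ℕ :=
  (G.rules.map fun r => r.rhs.depth).foldr max 0

/-!
Write `V = A(c)` and follow the path `V →u₂u₃ T'` through the finite head `A(x₁,…,xₘ)`.
Were the head reduced to a variable `xᵢ`, this could only happen after the root-performable
segment `u₂`, i.e. after at least `M₀` steps; replacing those steps by a shortest
`(A,i)`-sink word, of length `< M₀`, would shorten the shortest path `T →u T'`. Hence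
`T' = Kσ` with `σ xᵢ = cᵢ` and `A(x) →u₂u₃ K` on finite terms. After the first step the
head has depth `≤ Hmax`; afterwards no segment of length `M₀` is root-performable, so within
each such segment the head sinks into one of its children. Hence `K` is reached in fewer
than `M₀` steps from a subterm of a term of depth `≤ Hmax`, and each step adds at most
`Hmax` to the depth.
-/

section FinSubst

variable {α : Type*} {m : ℕ}

def finSubst (d : ℕ → α) (t : Fin m → α) (n : ℕ) : α :=
  if h : n < m then t ⟨n, h⟩ else d n

theorem finSubst_of_lt (d : ℕ → α) (t : Fin m → α) {n : ℕ} (h : n < m) :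
    finSubst d t n = t ⟨n, h⟩ :=
  dif_pos h

@[simp]
theorem finSubst_val (d : ℕ → α) (t : Fin m → α) (i : Fin m) : finSubst d t i = t i :=
  finSubst_of_lt d t i.isLt

theorem finSubst_of_not_lt (d : ℕ → α) (t : Fin m → α) {n : ℕ} (h : ¬n < m) :
    finSubst d t n = d n :=
  dif_neg h

theorem comp_finSubst {β : Type*} (f : α → β) (d : ℕ → α) (t : Fin m → α) :
    f ∘ finSubst d t = finSubst (f ∘ d) (f ∘ t) := by
  funext n
  simp only [Function.comp_apply, finSubst]
  split_ifs <;> rfl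

theorem exists_eq_of_finSubst_ne {d : ℕ → α} {t : Fin m → α} {n : ℕ}
    (h : finSubst d t n ≠ d n) : ∃ i, finSubst d t n = t i := by
  by_cases hn : n < m
  · exact ⟨⟨n, hn⟩, finSubst_of_lt d t hn⟩
  · exact absurd (finSubst_of_not_lt d t hn) h

end FinSubst

namespace GTerm

open PFunctor

variable {S : GrammarSig}

def substStep (σ : ℕ → GTerm S) (st : Bool × GTerm S) : S.P (Bool × GTerm S) :=
  match M.dest st.2 with
  | ⟨Sum.inl A, c⟩ => ⟨Sum.inl A, fun i => (st.1, c i)⟩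
  | ⟨Sum.inr n, _⟩ =>
    if st.1 then ⟨(M.dest (σ n)).1, fun i => (false, (M.dest (σ n)).2 i)⟩
    else ⟨Sum.inr n, fun e => e.elim⟩

theorem subst_eq_corec (σ : ℕ → GTerm S) (T : GTerm S) :
    subst σ T = M.corec (substStep σ) (true, T) :=
  rfl

theorem corec_substStep_false (σ : ℕ → GTerm S) (T : GTerm S) :
    M.corec (substStep σ) (false, T) = T := by
  refine M.bisim (fun x y => x = M.corec (substStep σ) (false, y)) ?_ _ _ rfl
  rintro _ y rfl
  rcases hy : M.dest y with ⟨A | n, g⟩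
  · refine ⟨Sum.inl A, fun i => M.corec (substStep σ) (false, g i), g, ?_, rfl, fun i => rfl⟩
    rw [M.dest_corec]
    simp only [substStep, hy]
    rfl
  · have hg : g = fun e => Empty.elim e := funext fun e => e.elim
    refine ⟨Sum.inr n, fun e => e.elim, g, ?_, by rw [hg], fun i => i.elim⟩
    rw [M.dest_corec]
    simp only [substStep, hy, Bool.false_eq_true, ↓reduceIte]
    erw [PFunctor.map_eq]
    congr 1
    funext e
    exact e.elim

theorem dest_var (n : ℕ) :
    M.dest (var S n) = (⟨Sum.inr n, fun e => e.elim⟩ : S.P (GTerm S)) :=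
  M.dest_mk _

theorem dest_app (A : Fin S.ntCount) (c : Fin (S.arity A) → GTerm S) :
    M.dest (app A c) = (⟨Sum.inl A, c⟩ : S.P (GTerm S)) :=
  M.dest_mk _

@[simp]
theorem subst_var (σ : ℕ → GTerm S) (n : ℕ) : subst σ (var S n) = σ n := by
  rw [← M.mk_dest (subst σ _), ← M.mk_dest (σ n)]
  congr 1
  rw [subst_eq_corec, M.dest_corec]
  simp only [substStep, dest_var]
  erw [if_pos trivial]
  rcases M.dest (σ n) with ⟨a, g⟩
  erw [PFunctor.map_eq]
  congr 1
  funext i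
  exact corec_substStep_false σ _

@[simp]
theorem subst_app (σ : ℕ → GTerm S) (A : Fin S.ntCount) (c : Fin (S.arity A) → GTerm S) :
    subst σ (app A c) = app A fun i => subst σ (c i) := by
  rw [← M.mk_dest (subst σ _), subst_eq_corec, M.dest_corec]
  rfl

theorem var_ne_app (n : ℕ) (A : Fin S.ntCount) (c : Fin (S.arity A) → GTerm S) :
    var S n ≠ app A c := fun h => by
  simpa [dest_var, dest_app] using congrArg (fun x => (M.dest x).1) h

theorem var_injective : Function.Injective (var S) := fun n m h => by
  have := congrArg (fun x => (M.dest x).1) h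
  simp only [dest_var] at this
  exact Sum.inr.inj this

theorem nt_eq_of_app_eq {A B : Fin S.ntCount} {c : Fin (S.arity A) → GTerm S}
    {d : Fin (S.arity B) → GTerm S} (h : app A c = app B d) : A = B := by
  have := congrArg (fun x => (M.dest x).1) h
  simp only [dest_app] at this
  exact Sum.inl.inj this

theorem app_injective (A : Fin S.ntCount) : Function.Injective (app (S := S) A) :=
  fun c d h => by
    have := congrArg M.dest h
    simp only [dest_app] at this
    injection this

theorem subst_lhsTerm (σ : ℕ → GTerm S) (A : Fin S.ntCount) :
    subst σ (lhsTerm A) = app A fun i => σ i := by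
  simp [lhsTerm]

end GTerm

theorem finSupp_var {S : GrammarSig} : FinSupp (GTerm.var S) := by
  simp [FinSupp]

theorem FinSupp.finSubst {S : GrammarSig} {σ : ℕ → GTerm S} (hσ : FinSupp σ) {m : ℕ}
    (c : Fin m → GTerm S) : FinSupp (finSubst σ c) := by
  refine ((Set.finite_Iio m).union hσ).subset fun n hn => ?_
  by_cases h : n < m
  · exact Or.inl h
  · exact Or.inr (by rwa [Set.mem_ofPred_eq, finSubst_of_not_lt σ c h] at hn)

namespace FTerm

variable {S : GrammarSig}

def subst (τ : ℕ → FTerm S) : FTerm S → FTerm S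
  | .var n => τ n
  | .app A c => .app A fun i => subst τ (c i)

theorem subst_congr {E : FTerm S} {τ₁ τ₂ : ℕ → FTerm S}
    (h : ∀ n, E.VOccurs n → τ₁ n = τ₂ n) : E.subst τ₁ = E.subst τ₂ := by
  induction E with
  | var n => exact h n rfl
  | app A c ih => exact congrArg (app A) (funext fun i => ih i fun n hn => h n ⟨i, hn⟩)

theorem subst_subst (τ₁ τ₂ : ℕ → FTerm S) (E : FTerm S) :
    (E.subst τ₁).subst τ₂ = E.subst fun n => (τ₁ n).subst τ₂ := by
  induction E with
  | var n => rfl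
  | app A c ih => exact congrArg (app A) (funext ih)

theorem exists_vOccurs_of_vOccurs_subst {τ : ℕ → FTerm S} {E : FTerm S} {n : ℕ}
    (h : (E.subst τ).VOccurs n) : ∃ m, E.VOccurs m ∧ (τ m).VOccurs n := by
  induction E with
  | var m => exact ⟨m, rfl, h⟩
  | app A c ih =>
    obtain ⟨i, hi⟩ := h
    obtain ⟨m, hm, hτ⟩ := ih i hi
    exact ⟨m, ⟨i, hm⟩, hτ⟩

theorem depth_lt_depth_app (A : Fin S.ntCount) (c : Fin (S.arity A) → FTerm S)
    (i : Fin (S.arity A)) : (c i).depth < (app A c).depth :=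
  Finset.le_sup (f := fun i => (c i).depth + 1) (Finset.mem_univ i)

theorem depth_subst_le {τ : ℕ → FTerm S} {E : FTerm S} {D : ℕ}
    (h : ∀ n, E.VOccurs n → (τ n).depth ≤ D) : (E.subst τ).depth ≤ E.depth + D := by
  induction E with
  | var n => simpa [depth, subst] using h n rfl
  | app A c ih =>
    refine Finset.sup_le fun i _ => show (subst τ (c i)).depth + 1 ≤ _ from ?_
    have := ih i fun n hn => h n ⟨i, hn⟩
    have := depth_lt_depth_app A c i
    omega

def lhs (A : Fin S.ntCount) : FTerm S :=
  .app A fun i => .var i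

@[simp]
theorem toTerm_lhs (A : Fin S.ntCount) : (lhs A).toTerm = lhsTerm A :=
  rfl

theorem subst_lhs {A : Fin S.ntCount} (t : Fin (S.arity A) → FTerm S) :
    (lhs A).subst (finSubst var t) = app A t :=
  congrArg (app A) (funext fun i => finSubst_val _ t i)

theorem lt_arity_of_vOccurs_lhs {A : Fin S.ntCount} {n : ℕ} (h : (lhs A).VOccurs n) :
    n < S.arity A := by
  obtain ⟨i, rfl⟩ := h
  exact i.isLt

theorem depth_lhs (A : Fin S.ntCount) : (lhs A).depth ≤ 1 :=
  Finset.sup_le fun _ _ => le_rfl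

theorem depth_finSubst_var_le {A : Fin S.ntCount} (t : Fin (S.arity A) → FTerm S) (n : ℕ) :
    (finSubst var t n).depth ≤ (app A t).depth := by
  by_cases h : n < S.arity A
  · exact (finSubst_of_lt var t h ▸ depth_lt_depth_app A t _).le
  · simp [finSubst_of_not_lt var t h, depth]

theorem toTerm_eq_var {E : FTerm S} {n : ℕ} (h : E.toTerm = GTerm.var S n) : E = var n := by
  cases E with
  | var m => rw [GTerm.var_injective h]
  | app A c => exact absurd h.symm (GTerm.var_ne_app _ _ _)

end FTerm

namespace GTerm

variable {S : GrammarSig}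

theorem subst_toTerm_congr {E : FTerm S} {σ₁ σ₂ : ℕ → GTerm S}
    (h : ∀ n, E.VOccurs n → σ₁ n = σ₂ n) : subst σ₁ E.toTerm = subst σ₂ E.toTerm := by
  induction E with
  | var n => simpa [FTerm.toTerm] using h n rfl
  | app A c ih =>
    simp only [FTerm.toTerm, subst_app]
    exact congrArg (app A) (funext fun i => ih i fun n hn => h n ⟨i, hn⟩)

theorem subst_toTerm_subst (σ : ℕ → GTerm S) (τ : ℕ → FTerm S) (E : FTerm S) :
    subst σ (E.subst τ).toTerm = subst (fun n => subst σ (τ n).toTerm) E.toTerm := by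
  induction E with
  | var n => simp [FTerm.subst, FTerm.toTerm]
  | app A c ih =>
    simp only [FTerm.subst, FTerm.toTerm, subst_app]
    exact congrArg (app A) (funext ih)

@[simp]
theorem subst_var_toTerm (E : FTerm S) : subst (var S) E.toTerm = E.toTerm := by
  induction E with
  | var n => simp [FTerm.toTerm]
  | app A c ih =>
    simp only [FTerm.toTerm, subst_app]
    exact congrArg (app A) (funext ih)

theorem subst_finSubst_lhsTerm (σ : ℕ → GTerm S) {A : Fin S.ntCount}
    (c : Fin (S.arity A) → GTerm S) : subst (finSubst σ c) (lhsTerm A) = app A c := by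
  simp [lhsTerm]

end GTerm

/-- The rule-based LTS restricted to finite terms, variables being stuck leaves. -/
inductive HeadPath (G : FOGrammar) : FTerm G.sig → List (GRule G.sig) → FTerm G.sig → Prop
  | nil (K : FTerm G.sig) : HeadPath G K [] K
  | cons {r : GRule G.sig} {t : Fin (G.sig.arity r.nt) → FTerm G.sig} {w : List (GRule G.sig)}
      {K' : FTerm G.sig} :
      r ∈ G.rules → HeadPath G (r.rhs.subst (finSubst .var t)) w K' →
      HeadPath G (.app r.nt t) (r :: w) K'

def HeadRootPerf (G : FOGrammar) (K : FTerm G.sig) (w : List (GRule G.sig)) : Prop :=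
  ∃ B t, K = .app B t ∧ ∃ J, HeadPath G (.lhs B) w J

theorem GRule.depth_rhs_le_Hmax {G : FOGrammar} {r : GRule G.sig} (hr : r ∈ G.rules) :
    r.rhs.depth ≤ Hmax G :=
  List.le_max_of_le' 0 (List.mem_map_of_mem hr) le_rfl

theorem GRule.depth_rhs_subst_le {G : FOGrammar} {r : GRule G.sig} (hr : r ∈ G.rules)
    (t : Fin (G.sig.arity r.nt) → FTerm G.sig) :
    (r.rhs.subst (finSubst .var t)).depth ≤ Hmax G + ((FTerm.app r.nt t).depth - 1) := by
  have hsubst := FTerm.depth_subst_le (τ := finSubst .var t) (E := r.rhs)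
    (D := (FTerm.app r.nt t).depth - 1) fun n hn => by
      have := FTerm.depth_lt_depth_app r.nt t ⟨n, r.rhs_wf n hn⟩
      rw [finSubst_of_lt _ t (r.rhs_wf n hn)]
      omega
  have := GRule.depth_rhs_le_Hmax hr
  omega

theorem GRule.subst_rhs_subst {S : GrammarSig} (r : GRule S) (t : Fin (S.arity r.nt) → FTerm S)
    (τ : ℕ → FTerm S) :
    (r.rhs.subst (finSubst .var t)).subst τ =
      r.rhs.subst (finSubst .var fun i => (t i).subst τ) := by
  rw [FTerm.subst_subst]
  refine FTerm.subst_congr fun n hn => ?_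
  rw [finSubst_of_lt _ _ (r.rhs_wf n hn), finSubst_of_lt _ _ (r.rhs_wf n hn)]

namespace HeadPath

variable {G : FOGrammar} {K K' : FTerm G.sig} {w : List (GRule G.sig)}

theorem append {K₁ : FTerm G.sig} {w₁ : List (GRule G.sig)} (h : HeadPath G K w K₁)
    (h₁ : HeadPath G K₁ w₁ K') : HeadPath G K (w ++ w₁) K' := by
  induction h with
  | nil => exact h₁
  | cons hr _ ih => exact cons hr (ih h₁)

theorem exists_of_append {w₁ : List (GRule G.sig)} (h : HeadPath G K (w ++ w₁) K') :
    ∃ K₁, HeadPath G K w K₁ ∧ HeadPath G K₁ w₁ K' := by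
  induction w generalizing K with
  | nil => exact ⟨K, nil K, h⟩
  | cons r w ih =>
    cases h with
    | cons hr h =>
      obtain ⟨K₁, h, h₁⟩ := ih h
      exact ⟨K₁, cons hr h, h₁⟩

theorem eq_of_nil (h : HeadPath G K [] K') : K' = K := by
  cases h
  rfl

theorem eq_nil_of_var {n : ℕ} (h : HeadPath G (.var n) w K') : w = [] := by
  cases h
  rfl

theorem cons_inv {r : GRule G.sig} (h : HeadPath G K (r :: w) K') :
    ∃ t, K = .app r.nt t ∧ r ∈ G.rules ∧ HeadPath G (r.rhs.subst (finSubst .var t)) w K' := by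
  cases h with
  | cons hr h => exact ⟨_, rfl, hr, h⟩

theorem exists_of_cons {r : GRule G.sig} (h : HeadPath G K (r :: w) K') :
    ∃ K₀, HeadPath G K [r] K₀ ∧ HeadPath G K₀ w K' ∧ K₀.depth ≤ Hmax G + (K.depth - 1) := by
  obtain ⟨t, rfl, hr, h⟩ := h.cons_inv
  exact ⟨_, cons hr (nil _), h, GRule.depth_rhs_subst_le hr t⟩

theorem deterministic {K₁ : FTerm G.sig} (h : HeadPath G K w K') (h₁ : HeadPath G K w K₁) :
    K' = K₁ := by
  induction h with
  | nil => exact h₁.eq_of_nil.symm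
  | cons _ _ ih =>
    obtain ⟨t, ht, -, h₁⟩ := h₁.cons_inv
    cases ht
    exact ih h₁

theorem depth_le (h : HeadPath G K w K') : K'.depth ≤ K.depth + w.length * Hmax G := by
  induction h with
  | nil => simp
  | @cons r t w K' hr _ ih =>
    have := GRule.depth_rhs_subst_le hr t
    simp only [List.length_cons, add_mul, one_mul]
    omega

theorem vOccurs {n : ℕ} (h : HeadPath G K w K') (hn : K'.VOccurs n) : K.VOccurs n := by
  induction h with
  | nil => exact hn
  | @cons r t _ _ _ _ ih =>
    obtain ⟨m, hm, hτ⟩ := FTerm.exists_vOccurs_of_vOccurs_subst (ih hn)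
    have hlt := r.rhs_wf m hm
    rw [finSubst_of_lt _ t hlt] at hτ
    exact ⟨_, hτ⟩

theorem subst (h : HeadPath G K w K') (τ : ℕ → FTerm G.sig) :
    HeadPath G (K.subst τ) w (K'.subst τ) := by
  induction h with
  | nil => exact nil _
  | @cons r t _ _ hr _ ih =>
    exact cons hr (r.subst_rhs_subst t τ ▸ ih)

theorem lift {P : FTerm G.sig} {τ : ℕ → FTerm G.sig} (h : HeadPath G (P.subst τ) w K') :
    (∃ J, HeadPath G P w J ∧ K' = J.subst τ) ∨
      ∃ w₁ w₂ j, w = w₁ ++ w₂ ∧ HeadPath G P w₁ (.var j) ∧ HeadPath G (τ j) w₂ K' := by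
  generalize hK : P.subst τ = K at h
  induction h generalizing P with
  | nil => exact .inl ⟨P, nil P, hK.symm⟩
  | @cons r t w K' hr h ih =>
    cases P with
    | var j => exact .inr ⟨[], r :: w, j, rfl, nil _, (show τ j = _ from hK) ▸ cons hr h⟩
    | app B s =>
      cases hK
      rcases ih (r.subst_rhs_subst s τ) with ⟨J, hJ, rfl⟩ | ⟨w₁, w₂, j, rfl, h₁, h₂⟩
      · exact .inl ⟨J, cons hr hJ, rfl⟩
      · exact .inr ⟨r :: w₁, w₂, j, rfl, cons hr h₁, h₂⟩

end HeadPath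

namespace LTSrul

variable {G : FOGrammar} {r : GRule G.sig}

theorem not_tr_var {n : ℕ} {U : GTerm G.sig} : ¬(LTSrul G).Tr r (GTerm.var G.sig n) U := by
  rintro ⟨-, τ, -, h, -⟩
  rw [GTerm.subst_lhsTerm] at h
  exact GTerm.var_ne_app _ _ _ h

theorem tr_subst_toTerm (hr : r ∈ G.rules) {σ : ℕ → GTerm G.sig} (hσ : FinSupp σ)
    (t : Fin (G.sig.arity r.nt) → FTerm G.sig) :
    (LTSrul G).Tr r (GTerm.subst σ (FTerm.app r.nt t).toTerm)
      (GTerm.subst σ (r.rhs.subst (finSubst .var t)).toTerm) := by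
  have hτ : (fun n => GTerm.subst σ (finSubst FTerm.var t n).toTerm)
      = finSubst σ fun i => GTerm.subst σ (t i).toTerm := by
    simpa [Function.comp_def, FTerm.toTerm] using
      comp_finSubst (fun E : FTerm G.sig => GTerm.subst σ E.toTerm) FTerm.var t
  refine ⟨hr, _, hσ.finSubst fun i => GTerm.subst σ (t i).toTerm, ?_, ?_⟩
  · simp [GTerm.subst_finSubst_lhsTerm, FTerm.toTerm]
  · rw [GTerm.subst_toTerm_subst, hτ]

theorem eq_of_tr_subst_app {σ : ℕ → GTerm G.sig} {B : Fin G.sig.ntCount}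
    {t : Fin (G.sig.arity B) → FTerm G.sig} {U : GTerm G.sig}
    (h : (LTSrul G).Tr r (GTerm.subst σ (FTerm.app B t).toTerm) U) :
    r.nt = B ∧ r ∈ G.rules ∧ U = GTerm.subst σ (r.rhs.subst (finSubst .var t)).toTerm := by
  obtain ⟨hr, τ, -, hT, rfl⟩ := h
  simp only [GTerm.subst_lhsTerm, FTerm.toTerm, GTerm.subst_app] at hT
  obtain rfl := GTerm.nt_eq_of_app_eq hT
  have hτ := GTerm.app_injective _ hT
  refine ⟨rfl, hr, ?_⟩
  rw [GTerm.subst_toTerm_subst]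
  refine GTerm.subst_toTerm_congr fun n hn => ?_
  have hlt := r.rhs_wf n hn
  simpa [finSubst_of_lt _ t hlt] using (congrFun hτ ⟨n, hlt⟩).symm

end LTSrul

namespace RPath

variable {G : FOGrammar} {T U : GTerm G.sig} {w : List (GRule G.sig)}

theorem append {T₁ : GTerm G.sig} {w₁ : List (GRule G.sig)} (h : RPath G T w T₁)
    (h₁ : RPath G T₁ w₁ U) : RPath G T (w ++ w₁) U := by
  induction h with
  | nil => exact h₁
  | cons htr _ ih => exact cons htr (ih h₁)

theorem of_var {n : ℕ} (h : RPath G (GTerm.var G.sig n) w U) :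
    w = [] ∧ U = GTerm.var G.sig n := by
  cases h with
  | nil => exact ⟨rfl, rfl⟩
  | cons htr _ => exact absurd htr LTSrul.not_tr_var

theorem lift {σ : ℕ → GTerm G.sig} {K : FTerm G.sig} (h : RPath G (GTerm.subst σ K.toTerm) w U) :
    (∃ K', HeadPath G K w K' ∧ U = GTerm.subst σ K'.toTerm) ∨
      ∃ w₁ w₂ n, w = w₁ ++ w₂ ∧ HeadPath G K w₁ (.var n) ∧ RPath G (σ n) w₂ U := by
  generalize hT : GTerm.subst σ K.toTerm = T at h
  induction h generalizing K with
  | nil => exact .inl ⟨K, .nil K, hT.symm⟩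
  | @cons _ _ _ r w htr h ih =>
    subst hT
    cases K with
    | var n =>
      simp only [FTerm.toTerm, GTerm.subst_var] at htr
      exact .inr ⟨[], r :: w, n, rfl, .nil _, cons htr h⟩
    | app B t =>
      obtain ⟨rfl, hr, rfl⟩ := LTSrul.eq_of_tr_subst_app htr
      rcases ih rfl with ⟨K', hK', rfl⟩ | ⟨w₁, w₂, n, rfl, h₁, h₂⟩
      · exact .inl ⟨K', .cons hr hK', rfl⟩
      · exact .inr ⟨r :: w₁, w₂, n, rfl, .cons hr h₁, h₂⟩

theorem exists_headPath {K : FTerm G.sig} (h : RPath G K.toTerm w U) :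
    ∃ K', HeadPath G K w K' ∧ U = K'.toTerm := by
  rcases lift (σ := GTerm.var G.sig) (by rwa [GTerm.subst_var_toTerm]) with
    ⟨K', hK', rfl⟩ | ⟨w₁, w₂, n, rfl, h₁, h₂⟩
  · exact ⟨K', hK', GTerm.subst_var_toTerm K'⟩
  · obtain ⟨rfl, rfl⟩ := of_var h₂
    exact ⟨.var n, by simpa using h₁, rfl⟩

end RPath

theorem HeadPath.rPath_subst {G : FOGrammar} {K K' : FTerm G.sig} {w : List (GRule G.sig)}
    (h : HeadPath G K w K') {σ : ℕ → GTerm G.sig} (hσ : FinSupp σ) :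
    RPath G (GTerm.subst σ K.toTerm) w (GTerm.subst σ K'.toTerm) := by
  induction h with
  | nil => exact .nil _
  | cons hr _ ih => exact .cons (LTSrul.tr_subst_toTerm hr hσ _) ih

theorem HeadRootPerf.rootPerf_subst {G : FOGrammar} {K : FTerm G.sig} {w : List (GRule G.sig)}
    (h : HeadRootPerf G K w) (σ : ℕ → GTerm G.sig) : RootPerf G (GTerm.subst σ K.toTerm) w := by
  obtain ⟨B, t, rfl, J, hJ⟩ := h
  refine ⟨B, _, by simp only [FTerm.toTerm, GTerm.subst_app]; rfl, J.toTerm, ?_⟩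
  have := hJ.rPath_subst finSupp_var
  rwa [GTerm.subst_var_toTerm, GTerm.subst_var_toTerm] at this

theorem M0_pos (G : FOGrammar) : 0 < M0 G := by
  unfold M0
  omega

theorem exists_headPath_lhs_var_length_lt {G : FOGrammar}
    (hsink : ∀ (A : Fin G.sig.ntCount) (i : Fin (G.sig.arity A)), ∃ w, SinkWord G A i w)
    (A : Fin G.sig.ntCount) (i : Fin (G.sig.arity A)) :
    ∃ w, HeadPath G (.lhs A) w (.var i) ∧ w.length < M0 G := by
  obtain ⟨w, hw, hlen⟩ := Nat.sInf_mem (s := {n | ∃ w, SinkWord G A i w ∧ w.length = n})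
    (let ⟨w, hw⟩ := hsink A i; ⟨_, w, hw, rfl⟩)
  obtain ⟨K', hK', hK'var⟩ := RPath.exists_headPath (K := .lhs A) hw
  refine ⟨w, FTerm.toTerm_eq_var hK'var.symm ▸ hK', ?_⟩
  have hle : w.length ≤ Finset.univ.sup fun A : Fin G.sig.ntCount =>
      Finset.univ.sup fun i : Fin (G.sig.arity A) =>
        sInf {n | ∃ w, SinkWord G A i w ∧ w.length = n} :=
    hlen ▸ Finset.le_sup_of_le (Finset.mem_univ A) (Finset.le_sup (Finset.mem_univ i)
      (f := fun i => sInf {n | ∃ w, SinkWord G A i w ∧ w.length = n}))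
  unfold M0
  omega

namespace HeadPath

variable {G : FOGrammar} {K K' : FTerm G.sig} {w : List (GRule G.sig)}

theorem length_le_of_var {J : FTerm G.sig} {v l : List (GRule G.sig)} {n : ℕ}
    (hvar : HeadPath G K w (.var n)) (hv : HeadPath G K v J) (hwl : w <+: l) (hvl : v <+: l) :
    v.length ≤ w.length := by
  by_contra hlt
  obtain ⟨z, rfl⟩ := List.prefix_of_prefix_length_le hwl hvl (by omega)
  obtain ⟨K₁, hK₁, hz⟩ := hv.exists_of_append
  obtain rfl := hvar.deterministic hK₁
  simp [hz.eq_nil_of_var] at hlt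

theorem exists_sink_of_not_headRootPerf {B : Fin G.sig.ntCount}
    {t : Fin (G.sig.arity B) → FTerm G.sig} (h : HeadPath G (.app B t) w K')
    (hw : ¬HeadRootPerf G (.app B t) w) :
    ∃ w₁ w₂ j, w = w₁ ++ w₂ ∧ w₁ ≠ [] ∧ HeadPath G (.app B t) w₁ (finSubst .var t j) ∧
      HeadPath G (finSubst .var t j) w₂ K' := by
  rw [← FTerm.subst_lhs t] at h
  rcases h.lift with ⟨J, hJ, -⟩ | ⟨w₁, w₂, j, rfl, h₁, h₂⟩
  · exact absurd ⟨B, t, rfl, J, hJ⟩ hw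
  refine ⟨w₁, w₂, j, rfl, ?_, FTerm.subst_lhs t ▸ h₁.subst (finSubst .var t), h₂⟩
  rintro rfl
  cases h₁.eq_of_nil

theorem depth_le_of_forall_not_headRootPerf {M : ℕ} (h : HeadPath G K w K')
    (hwin : ∀ a b c K₁, w = a ++ b ++ c → b.length = M → HeadPath G K a K₁ →
      ¬HeadRootPerf G K₁ b) :
    K'.depth ≤ K.depth + M * Hmax G := by
  induction hn : w.length using Nat.strong_induction_on generalizing K w with
  | _ n ih =>
  subst hn
  by_cases hshort : w.length < M
  · calc K'.depth ≤ K.depth + w.length * Hmax G := h.depth_le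
      _ ≤ K.depth + M * Hmax G := by gcongr
  cases K with
  | var n =>
    obtain rfl := h.eq_nil_of_var
    rw [h.eq_of_nil]
    omega
  | app B t =>
    rw [← List.take_append_drop M w] at h
    obtain ⟨Kb, hb, hc⟩ := h.exists_of_append
    obtain ⟨w₁, w₂, j, hsplit, hw₁, h₁, h₂⟩ := hb.exists_sink_of_not_headRootPerf
      (hwin [] (w.take M) (w.drop M) _ (by simp) (by simp; omega) (.nil _))
    have hlen : (w₂ ++ w.drop M).length < w.length := by
      have := congrArg List.length hsplit
      have := List.length_pos_of_ne_nil hw₁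
      simp only [List.length_append, List.length_take, List.length_drop] at *
      omega
    have hrec := ih _ hlen (h₂.append hc) (fun a b c K₁ hw hb ha => hwin (w₁ ++ a) b c K₁
      (by rw [← List.take_append_drop M w, hsplit, List.append_assoc, hw]; simp) hb
      (h₁.append ha)) rfl
    have := FTerm.depth_finSubst_var_le t j
    omega

end HeadPath

theorem RPath.exists_headPath_of_shortest {G : FOGrammar}
    (hsink : ∀ (A : Fin G.sig.ntCount) (i : Fin (G.sig.arity A)), ∃ w, SinkWord G A i w)
    {T T' : GTerm G.sig} {A : Fin G.sig.ntCount} {c : Fin (G.sig.arity A) → GTerm G.sig}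
    {u v w : List (GRule G.sig)} (hu : RPath G T u (.app A c)) (hw : RPath G (.app A c) w T')
    (hshortest : ∀ u', RPath G T u' T' → (u ++ w).length ≤ u'.length)
    (hv : v <+: w) (hvlen : M0 G ≤ v.length) (hperf : ∃ J, HeadPath G (.lhs A) v J) :
    ∃ K', HeadPath G (.lhs A) w K' ∧ T' = GTerm.subst (finSubst (GTerm.var G.sig) c) K'.toTerm := by
  have hσ := finSupp_var.finSubst c
  rw [← GTerm.subst_finSubst_lhsTerm (GTerm.var G.sig) c] at hw
  rcases RPath.lift (K := .lhs A) hw with hK | ⟨w₁, w₂, n, rfl, hcol, hrest⟩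
  · exact hK
  exfalso
  obtain ⟨J, hJ⟩ := hperf
  have hn : n < G.sig.arity A := FTerm.lt_arity_of_vOccurs_lhs (hcol.vOccurs rfl)
  have hlen := hcol.length_le_of_var hJ (List.prefix_append _ _) hv
  obtain ⟨s, hs, hslen⟩ := exists_headPath_lhs_var_length_lt hsink A ⟨n, hn⟩
  have hs' := hs.rPath_subst hσ
  simp only [FTerm.toTerm_lhs, GTerm.subst_finSubst_lhsTerm, FTerm.toTerm, GTerm.subst_var] at hs'
  have := hshortest _ (hu.append (hs'.append hrest))
  simp only [List.length_append] at this
  omega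

theorem last_nonsink_gives_bounded_head_general (G : FOGrammar)
    (hsink : ∀ (A : Fin G.sig.ntCount) (i : Fin (G.sig.arity A)),
      ∃ w, SinkWord G A i w)
    (T V V' T' : GTerm G.sig) (u u1 u2 u3 : List (GRule G.sig))
    (hu : u = u1 ++ u2 ++ u3)
    (hshortest : ∀ v : List (GRule G.sig), RPath G T v T' → u.length ≤ v.length)
    (h1 : RPath G T u1 V) (h2 : RPath G V u2 V') (h3 : RPath G V' u3 T')
    (hlen2 : u2.length = M0 G) (hperf : RootPerf G V u2)
    (hlast : ∀ (v1 v2 v3 : List (GRule G.sig)) (W : GTerm G.sig),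
      u = v1 ++ v2 ++ v3 → v2.length = M0 G → u1.length < v1.length →
      RPath G T v1 W → ¬ RootPerf G W v2) :
    ∃ (g : FTerm G.sig) (σ : ℕ → GTerm G.sig), FinSupp σ ∧
      g.depth ≤ (1 + M0 G) * Hmax G ∧
      T' = GTerm.subst σ g.toTerm ∧
      ∀ n : ℕ, σ n ≠ GTerm.var G.sig n → childRel G.sig V (σ n) := by
  obtain ⟨A, c, rfl, H, hH⟩ := hperf
  obtain ⟨J, hJ, -⟩ := RPath.exists_headPath (K := .lhs A) hH
  obtain ⟨K, hK, rfl⟩ := RPath.exists_headPath_of_shortest hsink h1 (h2.append h3)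
    (by simpa [hu] using hshortest) (List.prefix_append _ _) hlen2.ge ⟨J, hJ⟩
  obtain ⟨r, u2', rfl⟩ := List.exists_cons_of_length_pos (hlen2 ▸ M0_pos G)
  obtain ⟨K₀, hstep, hK₀, hdepth₀⟩ := hK.exists_of_cons
  have hσ := finSupp_var.finSubst c
  have hwin : ∀ a b w K₁, u2' ++ u3 = a ++ b ++ w → b.length = M0 G →
      HeadPath G K₀ a K₁ → ¬HeadRootPerf G K₁ b := by
    intro a b w K₁ hsplit hb ha hperf
    have hpath := (hstep.append ha).rPath_subst hσ
    rw [FTerm.toTerm_lhs, GTerm.subst_finSubst_lhsTerm] at hpath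
    exact hlast (u1 ++ r :: a) b w _ (by simp [hu, hsplit]) hb (by simp) (h1.append hpath)
      (hperf.rootPerf_subst _)
  refine ⟨K, _, hσ, ?_, rfl, fun n hn => ?_⟩
  · have := hK₀.depth_le_of_forall_not_headRootPerf hwin
    have := FTerm.depth_lhs A
    rw [add_mul, one_mul]
    omega
  · obtain ⟨i, hi⟩ := exists_eq_of_finSubst_ne hn
    exact ⟨A, c, rfl, i, hi⟩

/-- assume every `(A,i)` has a sink word. Suppose `T →u T'` is a shortest
path from `T` to `T'` in `L^rul_G` and is not sinking, written `T →u1 V →u2 V' →u3 T'`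
where `V →u2 V'` is the last non-sink occurring in the path. Then `T' = Gσ` for a
finite term `G` with `depth(G) ≤ (1 + M_0)·Hmax` and a substitution `σ` whose range
consists of root-successors of `V`. -/
theorem last_nonsink_gives_bounded_head (G : FOGrammar)
    (hsink : ∀ (A : Fin G.sig.ntCount) (i : Fin (G.sig.arity A)),
      ∃ w, SinkWord G A i w)
    (T V V' T' : GTerm G.sig) (u u1 u2 u3 : List (GRule G.sig))
    (hu : u = u1 ++ u2 ++ u3)
    (hpath : RPath G T u T')
    (hshortest : ∀ v : List (GRule G.sig), RPath G T v T' → u.length ≤ v.length)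
    (h1 : RPath G T u1 V) (h2 : RPath G V u2 V') (h3 : RPath G V' u3 T')
    (hlen2 : u2.length = M0 G) (hperf : RootPerf G V u2)
    (hlast : ∀ (v1 v2 v3 : List (GRule G.sig)) (W : GTerm G.sig),
      u = v1 ++ v2 ++ v3 → v2.length = M0 G → u1.length < v1.length →
      RPath G T v1 W → ¬ RootPerf G W v2) :
    ∃ (g : FTerm G.sig) (σ : ℕ → GTerm G.sig), FinSupp σ ∧
      g.depth ≤ (1 + M0 G) * Hmax G ∧
      T' = GTerm.subst σ g.toTerm ∧
      ∀ n : ℕ, σ n ≠ GTerm.var G.sig n → childRel G.sig V (σ n) :=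
  last_nonsink_gives_bounded_head_general G hsink T V V' T' u u1 u2 u3 hu hshortest h1 h2 h3 hlen2
    hperf hlast
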